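/- arXiv:1301.6111 — 2 statements merged into one kernel-verified Lean document; each statement's English description precedes it below -/
import Mathlib

section
/- If x1 and x2 are symmetric probability measures on the extended reals, then x1 ⊛ x2 is again a symmetric probability measure on the extended reals. -/
open MeasureTheory Real Filter Topology Polynomial

noncomputable section

/-- The space of finite signed Borel measures on the extended reals `ℝ̄`. -/
abbrev SM := MeasureTheory.SignedMeasure EReal

namespace SCLDPC

/-- The weight `e^{-α/2}` as an extended nonnegative real (`+∞` at `α = -∞`). -/
def wt (α : EReal) : ENNReal :=
  if α = ⊥ then ⊤ else if α = ⊤ then 0 else ENNReal.ofReal (Real.exp (-(α.toReal) / 2))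

/-- A (nonnegative) Borel measure `μ` on `ℝ̄` is symmetric if
`∫_{-E} e^{-α/2} μ(dα) = ∫_{E} e^{-α/2} μ(dα)` for every Borel set `E`
(stated with extended nonnegative integrals, which is equivalent to requiring
equality whenever one of the two sides is finite). -/
def IsSymmMeasure (μ : Measure EReal) : Prop :=
  ∀ E : Set EReal, MeasurableSet E →
    ∫⁻ α in (fun a : EReal => -a) ⁻¹' E, wt α ∂μ = ∫⁻ α in E, wt α ∂μ

/-- Positive part of the Jordan decomposition. -/
def jp (x : SM) : Measure EReal := x.toJordanDecomposition.posPart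

/-- Negative part of the Jordan decomposition. -/
def jn (x : SM) : Measure EReal := x.toJordanDecomposition.negPart

instance (x : SM) : IsFiniteMeasure (jp x) := x.toJordanDecomposition.posPart_finite

instance (x : SM) : IsFiniteMeasure (jn x) := x.toJordanDecomposition.negPart_finite

/-- A finite signed Borel measure on `ℝ̄` is symmetric iff both parts of its Jordan
decomposition are symmetric measures. -/
def IsSymm (x : SM) : Prop := IsSymmMeasure (jp x) ∧ IsSymmMeasure (jn x)

/-- Membership in `X`, the set of symmetric probability measures on `ℝ̄`. -/
def MemX (x : SM) : Prop :=
  (∃ (μ : Measure EReal) (hμ : IsProbabilityMeasure μ),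
      x = (letI := hμ; μ.toSignedMeasure)) ∧ IsSymm x

/-- Membership in `X_d`, the set of differences of symmetric probability measures. -/
def MemXd (y : SM) : Prop := ∃ x1 x2 : SM, MemX x1 ∧ MemX x2 ∧ y = x1 - x2

/-- Integral of a real function against a finite signed measure. -/
def sInt (f : EReal → ℝ) (x : SM) : ℝ := (∫ α, f α ∂(jp x)) - ∫ α, f α ∂(jn x)

/-- `tanh(α/2)` extended continuously to `ℝ̄`. -/
def tanhHalf (α : EReal) : ℝ :=
  if α = ⊤ then 1 else if α = ⊥ then -1 else Real.tanh (α.toReal / 2)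

/-- The inverse hyperbolic tangent on `(-1, 1)`. -/
def artanh (t : ℝ) : ℝ := Real.log ((1 + t) / (1 - t)) / 2

/-- `2 tanh⁻¹(t)` valued in `ℝ̄` (sending `t ≥ 1` to `+∞` and `t ≤ -1` to `-∞`). -/
def atanhTwo (t : ℝ) : EReal :=
  if 1 ≤ t then ⊤ else if t ≤ -1 then ⊥ else ((2 * artanh t : ℝ) : EReal)

/-- Variable-node convolution `⊛` of two (nonnegative) measures:
`(μ ⊛ ν)(E) = ∫ μ(E - α) ν(dα)`, i.e. the pushforward of `μ × ν` under addition. -/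
def mConv (μ ν : Measure EReal) : Measure EReal :=
  (μ.prod ν).map fun p => p.1 + p.2

/-- Check-node convolution `⊠` of two (nonnegative) measures:
`(μ ⊠ ν)(E) = ∫ μ(2 tanh⁻¹(tanh(E/2) / tanh(α/2))) ν(dα)`, where the argument of `μ`
is the image of `E` under `β ↦ 2 tanh⁻¹(tanh(β/2) / tanh(α/2))`; equivalently, the
pushforward of `μ × ν` under `(β, α) ↦ 2 tanh⁻¹(tanh(β/2) · tanh(α/2))`. -/
def mCheck (μ ν : Measure EReal) : Measure EReal :=
  (μ.prod ν).map fun p => atanhTwo (tanhHalf p.1 * tanhHalf p.2)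

instance (μ ν : Measure EReal) [IsFiniteMeasure μ] [IsFiniteMeasure ν] :
    IsFiniteMeasure (mConv μ ν) := by unfold mConv; infer_instance

instance (μ ν : Measure EReal) [IsFiniteMeasure μ] [IsFiniteMeasure ν] :
    IsFiniteMeasure (mCheck μ ν) := by unfold mCheck; infer_instance

/-- The variable-node operation `⊛` extended bilinearly to finite signed measures. -/
def sConv (x y : SM) : SM :=
  (mConv (jp x) (jp y)).toSignedMeasure - (mConv (jp x) (jn y)).toSignedMeasure
    - (mConv (jn x) (jp y)).toSignedMeasure + (mConv (jn x) (jn y)).toSignedMeasure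

/-- The check-node operation `⊠` extended bilinearly to finite signed measures. -/
def sCheck (x y : SM) : SM :=
  (mCheck (jp x) (jp y)).toSignedMeasure - (mCheck (jp x) (jn y)).toSignedMeasure
    - (mCheck (jn x) (jp y)).toSignedMeasure + (mCheck (jn x) (jn y)).toSignedMeasure

end SCLDPC

/-!
Write `μ̃ = μ.withDensity wt` for the tilt of `μ` by `wt α = e^{-α/2}`; symmetry of `μ` says
exactly that `μ̃` is invariant under `α ↦ -α`. Since `wt ⊤ = 0` and `wt ⊥ = ⊤`, a symmetric
measure does not charge `⊥`, and `μ̃` charges neither `⊥` nor `⊤`. Off `⊥` the weight is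
multiplicative, `wt (a + b) = wt a * wt b`, so tilting commutes with `⊛`:
`(μ₁ ⊛ μ₂)~ = μ̃₁ ⊛ μ̃₂`. Off `{⊥, ⊤}` negation is additive, so negation commutes with `⊛` on
tilted measures, and `(μ₁ ⊛ μ₂)~` inherits negation invariance from `μ̃₁` and `μ̃₂`.
-/

namespace MeasureTheory

variable {α β : Type*} [MeasurableSpace α] [MeasurableSpace β]

theorem Measure.toJordanDecomposition_toSignedMeasure (μ : Measure α) [IsFiniteMeasure μ] :
    μ.toSignedMeasure.toJordanDecomposition = ⟨μ, 0, .zero_right⟩ := by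
  apply JordanDecomposition.toSignedMeasure_injective
  rw [SignedMeasure.toSignedMeasure_toJordanDecomposition]
  exact (sub_zero _).symm.trans (congrArg _ Measure.toSignedMeasure_zero.symm)

theorem Measure.map_withDensity_comp {f : α → β} (hf : Measurable f) {g : β → ENNReal}
    (hg : Measurable g) (μ : Measure α) :
    (μ.withDensity (g ∘ f)).map f = (μ.map f).withDensity g := by
  ext E hE
  rw [withDensity_apply _ hE, Measure.map_apply hf hE, withDensity_apply _ (hf hE),
    setLIntegral_map hE hg hf, Function.comp_def]

end MeasureTheory

namespace SCLDPC

open Set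

theorem measurable_wt : Measurable wt := by
  unfold wt
  refine Measurable.ite (measurableSet_singleton ⊥) measurable_const ?_
  refine Measurable.ite (measurableSet_singleton ⊤) measurable_const ?_
  exact (measurable_ereal_toReal.neg.div_const 2).exp.ennreal_ofReal

@[simp] theorem wt_bot : wt ⊥ = ⊤ := rfl

@[simp] theorem wt_top : wt ⊤ = 0 := by simp [wt]

theorem wt_add {a b : EReal} (ha : a ≠ ⊥) (hb : b ≠ ⊥) : wt (a + b) = wt a * wt b := by
  induction a using EReal.rec with
  | bot => exact absurd rfl ha
  | top => simp [EReal.top_add_of_ne_bot hb]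
  | coe x =>
    induction b using EReal.rec with
    | bot => exact absurd rfl hb
    | top => simp [EReal.add_top_of_ne_bot ha]
    | coe y =>
      simp only [wt, ← EReal.coe_add, EReal.coe_ne_bot, EReal.coe_ne_top, if_false,
        EReal.toReal_coe]
      rw [← ENNReal.ofReal_mul (Real.exp_nonneg _), ← Real.exp_add]
      ring_nf

section JordanParts

variable (μ : Measure EReal) [IsFiniteMeasure μ]

@[simp] theorem jp_toSignedMeasure : jp μ.toSignedMeasure = μ := by
  simp only [jp, Measure.toJordanDecomposition_toSignedMeasure]

@[simp] theorem jn_toSignedMeasure : jn μ.toSignedMeasure = 0 := by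
  simp only [jn, Measure.toJordanDecomposition_toSignedMeasure]

end JordanParts

theorem isSymmMeasure_zero : IsSymmMeasure 0 := fun _ _ => by simp

theorem isSymm_toSignedMeasure_iff (μ : Measure EReal) [IsFiniteMeasure μ] :
    IsSymm μ.toSignedMeasure ↔ IsSymmMeasure μ := by
  simp [IsSymm, isSymmMeasure_zero]

theorem memX_iff {x : SM} :
    MemX x ↔ ∃ (μ : Measure EReal) (_ : IsProbabilityMeasure μ),
      x = μ.toSignedMeasure ∧ IsSymmMeasure μ := by
  constructor
  · rintro ⟨⟨μ, _, rfl⟩, hsymm⟩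
    exact ⟨μ, inferInstance, rfl, (isSymm_toSignedMeasure_iff μ).1 hsymm⟩
  · rintro ⟨μ, _, rfl, hsymm⟩
    exact ⟨⟨μ, inferInstance, rfl⟩, (isSymm_toSignedMeasure_iff μ).2 hsymm⟩

@[simp] theorem mConv_zero_left (ν : Measure EReal) : mConv 0 ν = 0 := by
  simp [mConv]

@[simp] theorem mConv_zero_right (μ : Measure EReal) : mConv μ 0 = 0 := by
  simp [mConv]

instance (μ ν : Measure EReal) [IsProbabilityMeasure μ] [IsProbabilityMeasure ν] :
    IsProbabilityMeasure (mConv μ ν) :=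
  Measure.isProbabilityMeasure_map measurable_add.aemeasurable

theorem sConv_toSignedMeasure (μ ν : Measure EReal) [IsFiniteMeasure μ] [IsFiniteMeasure ν] :
    sConv μ.toSignedMeasure ν.toSignedMeasure = (mConv μ ν).toSignedMeasure := by
  simp [sConv]

theorem isSymmMeasure_iff_map_neg (μ : Measure EReal) :
    IsSymmMeasure μ ↔ (μ.withDensity wt).map (fun a => -a) = μ.withDensity wt := by
  have hneg : Measurable fun a : EReal => -a := measurable_neg
  refine ⟨fun h => Measure.ext fun E hE => ?_, fun h E hE => ?_⟩
  · rw [Measure.map_apply hneg hE, withDensity_apply _ (hneg hE), withDensity_apply _ hE]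
    exact h E hE
  · rw [← withDensity_apply _ hE, ← h, Measure.map_apply hneg hE,
      withDensity_apply _ (hneg hE)]

theorem IsSymmMeasure.measure_bot_eq_zero {μ : Measure EReal} (h : IsSymmMeasure μ) :
    μ {⊥} = 0 := by
  simpa using h {⊤} (measurableSet_singleton _)

theorem withDensity_wt_mConv {μ ν : Measure EReal} [SFinite μ] [SFinite ν]
    (hμ : μ {⊥} = 0) (hν : ν {⊥} = 0) :
    (mConv μ ν).withDensity wt = mConv (μ.withDensity wt) (ν.withDensity wt) := by
  have h_ne_bot : ∀ᵐ p ∂μ.prod ν, p.1 ≠ ⊥ ∧ p.2 ≠ ⊥ :=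
    (Measure.quasiMeasurePreserving_fst.ae (compl_mem_ae_iff.2 hμ)).and
      (Measure.quasiMeasurePreserving_snd.ae (compl_mem_ae_iff.2 hν))
  rw [mConv, mConv, ← Measure.map_withDensity_comp measurable_add measurable_wt,
    prod_withDensity measurable_wt measurable_wt]
  congr 1
  refine withDensity_congr_ae (h_ne_bot.mono fun p hp => ?_)
  exact wt_add hp.1 hp.2

theorem withDensity_wt_bot_top {μ : Measure EReal} (hμ : μ {⊥} = 0) :
    μ.withDensity wt {⊥, ⊤} = 0 := by
  rw [insert_eq]
  refine measure_union_null ?_ ?_ <;>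
    simp [withDensity_apply _ (measurableSet_singleton _), hμ]

theorem map_neg_mConv {μ ν : Measure EReal} [SFinite μ] [SFinite ν] (hμ : μ {⊥, ⊤} = 0) :
    (mConv μ ν).map (fun a => -a) = mConv (μ.map (fun a => -a)) (ν.map (fun a => -a)) := by
  have hneg : Measurable fun a : EReal => -a := measurable_neg
  rw [mConv, mConv, Measure.map_map hneg measurable_add, Measure.map_prod_map _ _ hneg hneg,
    Measure.map_map measurable_add (hneg.prodMap hneg)]
  refine Measure.map_congr ?_
  filter_upwards [Measure.quasiMeasurePreserving_fst.ae (compl_mem_ae_iff.2 hμ)] with p hp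
  simp only [mem_insert_iff, mem_singleton_iff, not_or] at hp
  simp only [Function.comp_apply, Prod.map_fst, Prod.map_snd]
  rw [EReal.neg_add (.inl hp.1) (.inl hp.2), sub_eq_add_neg]

theorem isSymmMeasure_mConv {μ ν : Measure EReal} [SFinite μ] [SFinite ν]
    (hμ : IsSymmMeasure μ) (hν : IsSymmMeasure ν) : IsSymmMeasure (mConv μ ν) := by
  have hμ_bot := hμ.measure_bot_eq_zero
  have hν_bot := hν.measure_bot_eq_zero
  rw [isSymmMeasure_iff_map_neg] at hμ hν ⊢
  rw [withDensity_wt_mConv hμ_bot hν_bot,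
    map_neg_mConv (withDensity_wt_bot_top hμ_bot), hμ, hν]

/-- If `x1` and `x2` are symmetric probability measures on the
extended reals, then `x1 ⊛ x2` is again a symmetric probability measure. -/
theorem conv_mem_X (x1 x2 : SM) (h1 : MemX x1) (h2 : MemX x2) :
    MemX (sConv x1 x2) := by
  obtain ⟨μ1, _, rfl, hsymm1⟩ := memX_iff.1 h1
  obtain ⟨μ2, _, rfl, hsymm2⟩ := memX_iff.1 h2
  rw [sConv_toSignedMeasure]
  exact memX_iff.2 ⟨mConv μ1 μ2, inferInstance, rfl, isSymmMeasure_mConv hsymm1 hsymm2⟩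

end SCLDPC
end
end

section
/- Both operations ⊛ and ⊠ on M are associative, commutative, and bilinear: for all x1, x2, x3 ∈ M and scalars a1, a2 ∈ ℝ, x1 ∗ (x2 ∗ x3) = (x1 ∗ x2) ∗ x3, x1 ∗ x2 = x2 ∗ x1, and (a1·x1 + a2·x2) ∗ x3 = a1·(x1 ∗ x3) + a2·(x2 ∗ x3), where ∗ denotes either ⊛ or ⊠. -/
/-!
Both operations are instances of one construction: for a measurable binary operation `F`, the
pushforward `(μ, ν) ↦ (μ × ν).map F` of a product of finite measures is additive and
`ℝ≥0`-homogeneous in each argument, and it is commutative (resp. associative) whenever `F` is,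
because swapping (resp. reassociating) a product measure commutes with pushing it forward.
Its extension to signed measures through the Jordan decomposition can be computed from any
representation `x = μ₁ - μ₂` by finite measures, which transports additivity and associativity
from measures to signed measures. Addition on `ℝ̄` is commutative and associative, and so is the
check-node map, since `tanhHalf ∘ atanhTwo` is the identity on `[-1, 1]`: it is multiplication
of `tanh(·/2)`-values in disguise.
-/

open MeasureTheory Real Filter Topology Polynomial

noncomputable section

namespace SCLDPC

open scoped NNReal

section PushforwardOfProduct

variable {α : Type*} [MeasurableSpace α] {F : α × α → α}

theorem map_prod_comm (hF : Measurable F) (hcomm : ∀ a b, F (a, b) = F (b, a))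
    (μ ν : Measure α) [SFinite μ] [SFinite ν] :
    (μ.prod ν).map F = (ν.prod μ).map F := by
  rw [← Measure.prod_swap, Measure.map_map hF measurable_swap]
  congr 1
  funext ⟨a, b⟩
  exact hcomm b a

theorem map_prod_map_prod_assoc (hF : Measurable F)
    (hassoc : ∀ a b c, F (F (a, b), c) = F (a, F (b, c)))
    (μ ν ρ : Measure α) [SFinite μ] [SFinite ν] [SFinite ρ] :
    (((μ.prod ν).map F).prod ρ).map F = (μ.prod ((ν.prod ρ).map F)).map F := by
  have hleft := Measure.map_prod_map (μ.prod ν) ρ hF measurable_id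
  have hright := Measure.map_prod_map μ (ν.prod ρ) measurable_id hF
  rw [Measure.map_id] at hleft hright
  rw [hleft, hright, ← Measure.prodAssoc_prod, Measure.map_map hF (hF.prodMap measurable_id),
    Measure.map_map hF (measurable_id.prodMap hF),
    Measure.map_map (hF.comp (measurable_id.prodMap hF)) (MeasurableEquiv.measurable _)]
  congr 1
  funext ⟨⟨a, b⟩, c⟩
  exact hassoc a b c

def pushProd (F : α × α → α) (μ ν : Measure α) [IsFiniteMeasure μ] [IsFiniteMeasure ν] :
    SignedMeasure α :=
  ((μ.prod ν).map F).toSignedMeasure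

theorem pushProd_add_left (hF : Measurable F) (μ₁ μ₂ ν : Measure α)
    [IsFiniteMeasure μ₁] [IsFiniteMeasure μ₂] [IsFiniteMeasure ν] :
    pushProd F (μ₁ + μ₂) ν = pushProd F μ₁ ν + pushProd F μ₂ ν := by
  rw [pushProd, Measure.toSignedMeasure_congr (by rw [Measure.add_prod, Measure.map_add _ _ hF]),
    Measure.toSignedMeasure_add]
  rfl

theorem pushProd_add_right (hF : Measurable F) (μ ν₁ ν₂ : Measure α)
    [IsFiniteMeasure μ] [IsFiniteMeasure ν₁] [IsFiniteMeasure ν₂] :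
    pushProd F μ (ν₁ + ν₂) = pushProd F μ ν₁ + pushProd F μ ν₂ := by
  rw [pushProd, Measure.toSignedMeasure_congr (by rw [Measure.prod_add, Measure.map_add _ _ hF]),
    Measure.toSignedMeasure_add]
  rfl

theorem pushProd_smul_left (c : ℝ≥0) (μ ν : Measure α) [IsFiniteMeasure μ] [IsFiniteMeasure ν] :
    pushProd F (c • μ) ν = (c : ℝ) • pushProd F μ ν := by
  rw [pushProd, Measure.toSignedMeasure_congr (by rw [Measure.prod_smul_left, Measure.map_smul]),
    Measure.toSignedMeasure_smul]
  rfl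

theorem pushProd_comm (hF : Measurable F) (hcomm : ∀ a b, F (a, b) = F (b, a))
    (μ ν : Measure α) [IsFiniteMeasure μ] [IsFiniteMeasure ν] :
    pushProd F μ ν = pushProd F ν μ :=
  Measure.toSignedMeasure_congr (map_prod_comm hF hcomm μ ν)

theorem pushProd_assoc (hF : Measurable F) (hassoc : ∀ a b c, F (F (a, b), c) = F (a, F (b, c)))
    (μ ν ρ : Measure α) [IsFiniteMeasure μ] [IsFiniteMeasure ν] [IsFiniteMeasure ρ] :
    pushProd F ((μ.prod ν).map F) ρ = pushProd F μ ((ν.prod ρ).map F) :=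
  Measure.toSignedMeasure_congr (map_prod_map_prod_assoc hF hassoc μ ν ρ)

end PushforwardOfProduct

section SignedPushforwardOfProduct

variable {α : Type*} [MeasurableSpace α] {F : α × α → α}

def signedPushProd (F : α × α → α) (x y : SignedMeasure α) : SignedMeasure α :=
  pushProd F x.toJordanDecomposition.posPart y.toJordanDecomposition.posPart
    - pushProd F x.toJordanDecomposition.posPart y.toJordanDecomposition.negPart
    - pushProd F x.toJordanDecomposition.negPart y.toJordanDecomposition.posPart
    + pushProd F x.toJordanDecomposition.negPart y.toJordanDecomposition.negPart

theorem pushProd_sub_left_congr (hF : Measurable F) {μ₁ μ₂ μ₁' μ₂' : Measure α}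
    [IsFiniteMeasure μ₁] [IsFiniteMeasure μ₂] [IsFiniteMeasure μ₁'] [IsFiniteMeasure μ₂']
    (h : μ₁.toSignedMeasure - μ₂.toSignedMeasure = μ₁'.toSignedMeasure - μ₂'.toSignedMeasure)
    (ν : Measure α) [IsFiniteMeasure ν] :
    pushProd F μ₁ ν - pushProd F μ₂ ν = pushProd F μ₁' ν - pushProd F μ₂' ν := by
  rw [sub_eq_sub_iff_add_eq_add, ← Measure.toSignedMeasure_add, ← Measure.toSignedMeasure_add,
    Measure.toSignedMeasure_eq_toSignedMeasure_iff] at h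
  rw [sub_eq_sub_iff_add_eq_add, ← pushProd_add_left hF, ← pushProd_add_left hF]
  simp only [h]

theorem pushProd_sub_right_congr (hF : Measurable F) {ν₁ ν₂ ν₁' ν₂' : Measure α}
    [IsFiniteMeasure ν₁] [IsFiniteMeasure ν₂] [IsFiniteMeasure ν₁'] [IsFiniteMeasure ν₂']
    (h : ν₁.toSignedMeasure - ν₂.toSignedMeasure = ν₁'.toSignedMeasure - ν₂'.toSignedMeasure)
    (μ : Measure α) [IsFiniteMeasure μ] :
    pushProd F μ ν₁ - pushProd F μ ν₂ = pushProd F μ ν₁' - pushProd F μ ν₂' := by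
  rw [sub_eq_sub_iff_add_eq_add, ← Measure.toSignedMeasure_add, ← Measure.toSignedMeasure_add,
    Measure.toSignedMeasure_eq_toSignedMeasure_iff] at h
  rw [sub_eq_sub_iff_add_eq_add, ← pushProd_add_right hF, ← pushProd_add_right hF]
  simp only [h]

theorem signedPushProd_eq_of_eq_sub (hF : Measurable F) {x y : SignedMeasure α}
    {μ₁ μ₂ ν₁ ν₂ : Measure α} [IsFiniteMeasure μ₁] [IsFiniteMeasure μ₂] [IsFiniteMeasure ν₁]
    [IsFiniteMeasure ν₂] (hx : x = μ₁.toSignedMeasure - μ₂.toSignedMeasure)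
    (hy : y = ν₁.toSignedMeasure - ν₂.toSignedMeasure) :
    signedPushProd F x y
      = pushProd F μ₁ ν₁ - pushProd F μ₁ ν₂ - pushProd F μ₂ ν₁ + pushProd F μ₂ ν₂ := by
  have hx' := x.toSignedMeasure_toJordanDecomposition.trans hx
  have hy' := y.toSignedMeasure_toJordanDecomposition.trans hy
  calc signedPushProd F x y
      = (pushProd F x.toJordanDecomposition.posPart y.toJordanDecomposition.posPart
          - pushProd F x.toJordanDecomposition.negPart y.toJordanDecomposition.posPart)
        - (pushProd F x.toJordanDecomposition.posPart y.toJordanDecomposition.negPart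
          - pushProd F x.toJordanDecomposition.negPart y.toJordanDecomposition.negPart) := by
        rw [signedPushProd]; abel
    _ = (pushProd F μ₁ y.toJordanDecomposition.posPart
          - pushProd F μ₂ y.toJordanDecomposition.posPart)
        - (pushProd F μ₁ y.toJordanDecomposition.negPart
          - pushProd F μ₂ y.toJordanDecomposition.negPart) := by
        rw [pushProd_sub_left_congr hF hx', pushProd_sub_left_congr hF hx']
    _ = (pushProd F μ₁ y.toJordanDecomposition.posPart
          - pushProd F μ₁ y.toJordanDecomposition.negPart)
        - (pushProd F μ₂ y.toJordanDecomposition.posPart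
          - pushProd F μ₂ y.toJordanDecomposition.negPart) := by abel
    _ = (pushProd F μ₁ ν₁ - pushProd F μ₁ ν₂) - (pushProd F μ₂ ν₁ - pushProd F μ₂ ν₂) := by
        rw [pushProd_sub_right_congr hF hy', pushProd_sub_right_congr hF hy']
    _ = _ := by abel

theorem signedPushProd_comm (hF : Measurable F) (hcomm : ∀ a b, F (a, b) = F (b, a))
    (x y : SignedMeasure α) : signedPushProd F x y = signedPushProd F y x := by
  simp only [signedPushProd, pushProd_comm hF hcomm y.toJordanDecomposition.posPart,
    pushProd_comm hF hcomm y.toJordanDecomposition.negPart]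
  abel

theorem signedPushProd_add_left (hF : Measurable F) (x y z : SignedMeasure α) :
    signedPushProd F (x + y) z = signedPushProd F x z + signedPushProd F y z := by
  have hxy : x + y
      = (x.toJordanDecomposition.posPart + y.toJordanDecomposition.posPart).toSignedMeasure
        - (x.toJordanDecomposition.negPart + y.toJordanDecomposition.negPart).toSignedMeasure := by
    conv_lhs => rw [← x.toSignedMeasure_toJordanDecomposition,
      ← y.toSignedMeasure_toJordanDecomposition]
    rw [Measure.toSignedMeasure_add, Measure.toSignedMeasure_add]
    unfold JordanDecomposition.toSignedMeasure
    abel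
  rw [signedPushProd_eq_of_eq_sub hF hxy z.toSignedMeasure_toJordanDecomposition.symm]
  simp only [pushProd_add_left hF, signedPushProd]
  abel

theorem signedPushProd_neg_left (x y : SignedMeasure α) :
    signedPushProd F (-x) y = -signedPushProd F x y := by
  simp only [signedPushProd, SignedMeasure.toJordanDecomposition_neg,
    JordanDecomposition.neg_posPart, JordanDecomposition.neg_negPart]
  abel

theorem signedPushProd_nnreal_smul_left (c : ℝ≥0) (x y : SignedMeasure α) :
    signedPushProd F (c • x) y = (c : ℝ) • signedPushProd F x y := by
  simp only [signedPushProd, SignedMeasure.toJordanDecomposition_smul,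
    JordanDecomposition.smul_posPart, JordanDecomposition.smul_negPart, pushProd_smul_left]
  module

theorem signedPushProd_smul_left (c : ℝ) (x y : SignedMeasure α) :
    signedPushProd F (c • x) y = c • signedPushProd F x y := by
  obtain ⟨c, rfl | rfl⟩ : ∃ c' : ℝ≥0, c = c' ∨ c = -c' := ⟨‖c‖₊, by
    rcases le_total 0 c with h | h
    · exact .inl (by simp [abs_of_nonneg h])
    · exact .inr (by simp [abs_of_nonpos h])⟩
  · exact signedPushProd_nnreal_smul_left c x y
  · rw [neg_smul (M := SignedMeasure α), neg_smul (M := SignedMeasure α),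
      signedPushProd_neg_left]
    exact congrArg Neg.neg (signedPushProd_nnreal_smul_left c x y)

theorem signedPushProd_eq_sub (x y : SignedMeasure α) :
    signedPushProd F x y
      = ((x.toJordanDecomposition.posPart.prod y.toJordanDecomposition.posPart).map F
          + (x.toJordanDecomposition.negPart.prod y.toJordanDecomposition.negPart).map F
          ).toSignedMeasure
        - ((x.toJordanDecomposition.posPart.prod y.toJordanDecomposition.negPart).map F
          + (x.toJordanDecomposition.negPart.prod y.toJordanDecomposition.posPart).map F
          ).toSignedMeasure := by
  rw [Measure.toSignedMeasure_add, Measure.toSignedMeasure_add, signedPushProd]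
  unfold pushProd
  abel

theorem signedPushProd_assoc (hF : Measurable F)
    (hassoc : ∀ a b c, F (F (a, b), c) = F (a, F (b, c))) (x y z : SignedMeasure α) :
    signedPushProd F (signedPushProd F x y) z = signedPushProd F x (signedPushProd F y z) := by
  rw [signedPushProd_eq_of_eq_sub hF (signedPushProd_eq_sub x y)
      z.toSignedMeasure_toJordanDecomposition.symm,
    signedPushProd_eq_of_eq_sub hF x.toSignedMeasure_toJordanDecomposition.symm
      (signedPushProd_eq_sub y z)]
  simp only [pushProd_add_left hF, pushProd_add_right hF, pushProd_assoc hF hassoc]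
  abel

end SignedPushforwardOfProduct

@[fun_prop]
theorem measurable_tanh : Measurable Real.tanh := by
  simp only [funext Real.tanh_eq_sinh_div_cosh]
  fun_prop

theorem tanhHalf_coe (r : ℝ) : tanhHalf r = Real.tanh (r / 2) := by
  simp [tanhHalf]

theorem tanhHalf_atanhTwo {t : ℝ} (ht : |t| ≤ 1) : tanhHalf (atanhTwo t) = t := by
  unfold atanhTwo
  obtain ⟨ht₁, ht₂⟩ := abs_le.1 ht
  split_ifs with h1 h2
  · simp [tanhHalf, le_antisymm ht₂ h1]
  · simp [tanhHalf, le_antisymm h2 ht₁]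
  · rw [tanhHalf_coe, mul_div_cancel_left₀ _ two_ne_zero, SCLDPC.artanh,
      ← one_div_mul_eq_div, ← Real.artanh_eq_half_log ⟨ht₁, ht₂⟩,
      Real.tanh_artanh ⟨lt_of_not_ge h2, lt_of_not_ge h1⟩]

theorem abs_tanhHalf_le_one (α : EReal) : |tanhHalf α| ≤ 1 := by
  unfold tanhHalf
  split_ifs
  · norm_num
  · norm_num
  · exact (Real.abs_tanh_lt_one _).le

@[fun_prop]
theorem measurable_tanhHalf : Measurable tanhHalf :=
  EReal.measurable_of_measurable_real <| by
    simp only [tanhHalf_coe]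
    fun_prop

@[fun_prop]
theorem measurable_atanhTwo : Measurable atanhTwo :=
  Measurable.ite measurableSet_Ici measurable_const <|
    Measurable.ite measurableSet_Iic measurable_const <| by unfold SCLDPC.artanh; fun_prop

theorem measurable_atanhTwo_tanhHalf_mul :
    Measurable fun p : EReal × EReal => atanhTwo (tanhHalf p.1 * tanhHalf p.2) := by
  fun_prop

theorem tanhHalf_atanhTwo_mul (a b : EReal) :
    tanhHalf (atanhTwo (tanhHalf a * tanhHalf b)) = tanhHalf a * tanhHalf b :=
  tanhHalf_atanhTwo <| by
    rw [abs_mul]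
    exact mul_le_one₀ (abs_tanhHalf_le_one a) (abs_nonneg _) (abs_tanhHalf_le_one b)

theorem atanhTwo_tanhHalf_mul_assoc (a b c : EReal) :
    atanhTwo (tanhHalf (atanhTwo (tanhHalf a * tanhHalf b)) * tanhHalf c)
      = atanhTwo (tanhHalf a * tanhHalf (atanhTwo (tanhHalf b * tanhHalf c))) := by
  rw [tanhHalf_atanhTwo_mul, tanhHalf_atanhTwo_mul, mul_assoc]

theorem sConv_eq_signedPushProd (x y : SM) :
    sConv x y = signedPushProd (fun p => p.1 + p.2) x y :=
  rfl

theorem sCheck_eq_signedPushProd (x y : SM) :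
    sCheck x y = signedPushProd (fun p => atanhTwo (tanhHalf p.1 * tanhHalf p.2)) x y :=
  rfl

theorem ops_associative_commutative_bilinear_general
    (x1 x2 x3 : SM) (a1 a2 : ℝ) :
    sConv x1 (sConv x2 x3) = sConv (sConv x1 x2) x3 ∧
    sConv x1 x2 = sConv x2 x1 ∧
    sConv (a1 • x1 + a2 • x2) x3 = a1 • sConv x1 x3 + a2 • sConv x2 x3 ∧
    sCheck x1 (sCheck x2 x3) = sCheck (sCheck x1 x2) x3 ∧
    sCheck x1 x2 = sCheck x2 x1 ∧
    sCheck (a1 • x1 + a2 • x2) x3 = a1 • sCheck x1 x3 + a2 • sCheck x2 x3 := by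
  simp only [sConv_eq_signedPushProd, sCheck_eq_signedPushProd]
  have hadd : Measurable fun p : EReal × EReal => p.1 + p.2 := by fun_prop
  have hcheck := measurable_atanhTwo_tanhHalf_mul
  refine ⟨(signedPushProd_assoc hadd add_assoc _ _ _).symm,
    signedPushProd_comm hadd add_comm _ _, ?_,
    (signedPushProd_assoc hcheck atanhTwo_tanhHalf_mul_assoc _ _ _).symm,
    signedPushProd_comm hcheck (fun a b => by rw [mul_comm]) _ _, ?_⟩ <;>
  rw [signedPushProd_add_left (by assumption), signedPushProd_smul_left, signedPushProd_smul_left]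

/-- Both `⊛` and `⊠` are associative, commutative, and bilinear on
the space `M` of finite signed symmetric Borel measures. -/
theorem ops_associative_commutative_bilinear
    (x1 x2 x3 : SM) (h1 : IsSymm x1) (h2 : IsSymm x2) (h3 : IsSymm x3) (a1 a2 : ℝ) :
    sConv x1 (sConv x2 x3) = sConv (sConv x1 x2) x3 ∧
    sConv x1 x2 = sConv x2 x1 ∧
    sConv (a1 • x1 + a2 • x2) x3 = a1 • sConv x1 x3 + a2 • sConv x2 x3 ∧
    sCheck x1 (sCheck x2 x3) = sCheck (sCheck x1 x2) x3 ∧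
    sCheck x1 x2 = sCheck x2 x1 ∧
    sCheck (a1 • x1 + a2 • x2) x3 = a1 • sCheck x1 x3 + a2 • sCheck x2 x3 :=
  ops_associative_commutative_bilinear_general x1 x2 x3 a1 a2

end SCLDPC
end
end
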